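/- A mafia group never lets its members go when they want to leave: with n = 25, μ = 0, σ = 12, for every integer threshold t with 0 ≤ t ≤ 24 and every group size g with 2 ≤ g ≤ 25, if a group member benefits from leaving the group (E_I(g−1, t) > E_G(g, t)), then the departure harms the remaining group members (E_G(g−1, t) < E_G(g, t)), so the mafia group blocks it. -/
import Mathlib


/-- Standard normal probability density function. -/
noncomputable def stdPDF (x : ℝ) : ℝ := (Real.sqrt (2 * Real.pi))⁻¹ * Real.exp (-(x ^ 2) / 2)

/-- Standard normal cumulative distribution function. -/
noncomputable def stdCDF (x : ℝ) : ℝ := ∫ u in Set.Iic x, stdPDF u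

/-- `Pkm p k m` = 1 if `k < -1`; `0` if `k ≥ m`; otherwise `∑_{i=k+1}^m C(m,i) p^i (1-p)^(m-i)`. -/
noncomputable def Pkm (p : ℝ) (k : ℤ) (m : ℕ) : ℝ :=
  if k < -1 then 1
  else if (m : ℤ) ≤ k then 0
  else ∑ i ∈ Finset.range (m + 1),
    if k < (i : ℤ) then (m.choose i : ℝ) * p ^ i * (1 - p) ^ (m - i) else 0

/-- The closed-form expected capital gain of an individualist (Corollary 1):
`E_I(n,g,t,μ,σ) = (r(P_{t−g−1,ℓ−1} − P_{t−g,ℓ}) + μ P_{t−g,ℓ}) Φ(μ_g)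
               + (r(P_{t−1,ℓ−1} − P_{t,ℓ}) + μ P_{t,ℓ}) Φ(−μ_g)`,
with `ℓ = n − g`, `q = Φ(μ/σ)`, `p = 1 − q`, `r = σ φ(μ/σ)/q`, `σ_g = σ/√g`, `μ_g = μ/σ_g`. -/
noncomputable def EI (n g : ℕ) (t : ℤ) (μ σ : ℝ) : ℝ :=
  let ℓ := n - g
  let q := stdCDF (μ / σ)
  let p := 1 - q
  let r := σ * stdPDF (μ / σ) / q
  let σg := σ / Real.sqrt g
  let μg := μ / σg
  (r * (Pkm p (t - g - 1) (ℓ - 1) - Pkm p (t - g) ℓ) + μ * Pkm p (t - g) ℓ) * stdCDF μg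
    + (r * (Pkm p (t - 1) (ℓ - 1) - Pkm p t ℓ) + μ * Pkm p t ℓ) * stdCDF (-μg)

/-- The closed-form expected capital gain of a group member (Corollary 1):
`E_G(n,g,t,μ,σ) = (P_{t−g,ℓ} − P_{t,ℓ})(μ Φ(μ_g) + σ_g φ(μ_g)) + μ P_{t,ℓ}`,
with `ℓ = n − g`, `q = Φ(μ/σ)`, `p = 1 − q`, `σ_g = σ/√g`, `μ_g = μ/σ_g`. -/
noncomputable def EG (n g : ℕ) (t : ℤ) (μ σ : ℝ) : ℝ :=
  let ℓ := n - g
  let q := stdCDF (μ / σ)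
  let p := 1 - q
  let σg := σ / Real.sqrt g
  let μg := μ / σg
  (Pkm p (t - g) ℓ - Pkm p t ℓ) * (μ * stdCDF μg + σg * stdPDF μg) + μ * Pkm p t ℓ

/-- `E_I(g,t) = E_I(25, g, t, 0, 12)`: society of `n = 25` agents, neutral environment. -/
noncomputable def EI25 (g : ℕ) (t : ℤ) : ℝ := EI 25 g t 0 12

/-- `E_G(g,t) = E_G(25, g, t, 0, 12)`: society of `n = 25` agents, neutral environment. -/
noncomputable def EG25 (g : ℕ) (t : ℤ) : ℝ := EG 25 g t 0 12

/-! ### Auxiliary lemmas -/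


lemma stdCDF_zero : stdCDF 0 = 1 / 2 := by
  have h2 : (∫ u in Set.Iic (0:ℝ), Real.exp (-(2⁻¹:ℝ) * u ^ 2))
      = ∫ u in Set.Ioi (0:ℝ), Real.exp (-(2⁻¹:ℝ) * u ^ 2) := by
    have := integral_comp_neg_Iic (0:ℝ) (fun u => Real.exp (-(2⁻¹:ℝ) * u ^ 2))
    simpa using this
  have h3 := integral_gaussian_Ioi (2⁻¹ : ℝ)
  have hsqrt : Real.sqrt (Real.pi / 2⁻¹) = Real.sqrt (2 * Real.pi) := by
    norm_num [mul_comm]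
  have hpos : 0 < Real.sqrt (2 * Real.pi) := Real.sqrt_pos.mpr (by positivity)
  unfold stdCDF stdPDF
  rw [MeasureTheory.integral_const_mul]
  simp_rw [show ∀ u : ℝ, -(u ^ 2) / 2 = -(2⁻¹:ℝ) * u ^ 2 from fun u => by ring]
  rw [h2, h3, hsqrt]
  field_simp

lemma stdPDF_zero_pos : 0 < stdPDF 0 := by
  unfold stdPDF
  positivity

/-- Integer numerator of `Pkm (1/2) k m` over `2 ^ m`. -/
def Nkm (k : ℤ) (m : ℕ) : ℤ :=
  if k < -1 then 2 ^ m
  else if (m : ℤ) ≤ k then 0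
  else ∑ i ∈ Finset.range (m + 1), if k < (i : ℤ) then (m.choose i : ℤ) else 0

lemma Pkm_half (k : ℤ) (m : ℕ) : Pkm (1/2) k m = (Nkm k m : ℝ) / 2 ^ m := by
  unfold Pkm Nkm
  split_ifs with h1 h2
  · push_cast
    rw [div_self (by positivity)]
  · simp
  · push_cast
    rw [Finset.sum_div]
    refine Finset.sum_congr rfl fun i hi => ?_
    have hi' : i ≤ m := Nat.lt_succ_iff.mp (Finset.mem_range.mp hi)
    split_ifs with h
    · rw [show (1 - 1/2 : ℝ) = 1/2 by norm_num, mul_assoc, ← pow_add,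
        Nat.add_sub_cancel' hi', one_div, inv_pow, ← div_eq_mul_inv]
    · simp

lemma EG25_eq (g : ℕ) (t : ℤ) :
    EG25 g t = (Pkm (1/2) (t - g) (25 - g) - Pkm (1/2) t (25 - g))
      * (12 / Real.sqrt g * stdPDF 0) := by
  simp only [EG25, EG, zero_div, stdCDF_zero, zero_mul, zero_add, add_zero, mul_zero]
  norm_num

lemma EI25_eq (g : ℕ) (t : ℤ) :
    EI25 g t = 12 * stdPDF 0 *
      (Pkm (1/2) (t - g - 1) (25 - g - 1) - Pkm (1/2) (t - g) (25 - g)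
        + (Pkm (1/2) (t - 1) (25 - g - 1) - Pkm (1/2) t (25 - g))) := by
  simp only [EI25, EI, zero_div, stdCDF_zero, zero_mul, zero_add, add_zero, mul_zero, neg_zero]
  norm_num
  ring

/-- The integer certificate: either the conclusion holds (first disjunct) or the
hypothesis `E_I(g-1,t) > E_G(g,t)` fails (other two disjuncts). -/
def Cond (g : ℕ) (t : ℤ) : Prop :=
  let D := Nkm (t - g) (25 - g) - Nkm t (25 - g)
  let D' := Nkm (t - g + 1) (25 - g + 1) - Nkm t (25 - g + 1)
  let A := 2 * (Nkm (t - g) (25 - g) + Nkm (t - 1) (25 - g))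
      - Nkm (t - g + 1) (25 - g + 1) - Nkm t (25 - g + 1)
  (0 ≤ D' ∧ 0 ≤ D ∧ (g : ℤ) * D' ^ 2 < 4 * ((g : ℤ) - 1) * D ^ 2)
    ∨ (A ≤ 0 ∧ 0 ≤ D)
    ∨ (0 < A ∧ 0 ≤ D ∧ (g : ℤ) * A ^ 2 ≤ 4 * D ^ 2)

instance (g : ℕ) (t : ℤ) : Decidable (Cond g t) := by unfold Cond; infer_instance

set_option maxHeartbeats 4000000 in
lemma condAll : ∀ g ∈ Finset.Icc 2 25, ∀ t ∈ Finset.Icc (0 : ℤ) 24, Cond g t := by decide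

set_option maxHeartbeats 1000000 in
/-- The real-number core of the argument. -/
lemma realLemma (c s s' e : ℝ) (n1 n2 n3 n4 n6 G : ℤ)
    (hc : 0 < c) (hs : 0 < s) (hs' : 0 < s') (he : 0 < e)
    (hs2 : s ^ 2 = (G : ℝ)) (hs'2 : s' ^ 2 = (G : ℝ) - 1)
    (hcond :
      (0 ≤ n2 - n4 ∧ 0 ≤ n1 - n6 ∧ G * (n2 - n4) ^ 2 < 4 * (G - 1) * (n1 - n6) ^ 2)
        ∨ (2 * (n1 + n3) - n2 - n4 ≤ 0 ∧ 0 ≤ n1 - n6)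
        ∨ (0 < 2 * (n1 + n3) - n2 - n4 ∧ 0 ≤ n1 - n6
            ∧ G * (2 * (n1 + n3) - n2 - n4) ^ 2 ≤ 4 * (n1 - n6) ^ 2))
    (hleave : 12 * c * ((n1 : ℝ) / e - (n2 : ℝ) / (e * 2)
        + ((n3 : ℝ) / e - (n4 : ℝ) / (e * 2)))
      > ((n1 : ℝ) / e - (n6 : ℝ) / e) * (12 / s * c)) :
    ((n2 : ℝ) / (e * 2) - (n4 : ℝ) / (e * 2)) * (12 / s' * c)
      < ((n1 : ℝ) / e - (n6 : ℝ) / e) * (12 / s * c) := by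
  have hsne : s ≠ 0 := hs.ne'
  have hs'ne : s' ≠ 0 := hs'.ne'
  have hene : e ≠ 0 := he.ne'
  -- rewrite the hypothesis in cleared form
  have e1 : 12 * c * ((n1 : ℝ) / e - (n2 : ℝ) / (e * 2)
        + ((n3 : ℝ) / e - (n4 : ℝ) / (e * 2)))
      = ((2 * ((n1 : ℝ) + n3) - n2 - n4) * s) * (6 * c / (e * s)) := by
    field_simp; ring
  have e2 : ((n1 : ℝ) / e - (n6 : ℝ) / e) * (12 / s * c)
      = (2 * ((n1 : ℝ) - n6)) * (6 * c / (e * s)) := by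
    field_simp; ring
  rw [e1, e2] at hleave
  have hleave' : 2 * ((n1 : ℝ) - n6) < (2 * ((n1 : ℝ) + n3) - n2 - n4) * s :=
    lt_of_mul_lt_mul_right hleave (by positivity)
  rcases hcond with ⟨h1, h2, h3⟩ | ⟨h1, h2⟩ | ⟨h1, h2, h3⟩
  · -- conclusion certificate
    have hD' : (0 : ℝ) ≤ (n2 : ℝ) - n4 := by exact_mod_cast h1
    have hD : (0 : ℝ) ≤ (n1 : ℝ) - n6 := by exact_mod_cast h2
    have h3' : (G : ℝ) * ((n2 : ℝ) - n4) ^ 2 < 4 * ((G : ℝ) - 1) * ((n1 : ℝ) - n6) ^ 2 := by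
      exact_mod_cast h3
    have hsq : (((n2 : ℝ) - n4) * s) ^ 2 < (2 * ((n1 : ℝ) - n6) * s') ^ 2 := by
      nlinarith [h3', hs2, hs'2]
    have h0 : 0 ≤ ((n2 : ℝ) - n4) * s := mul_nonneg hD' hs.le
    have h0' : 0 ≤ 2 * ((n1 : ℝ) - n6) * s' := mul_nonneg (by linarith) hs'.le
    have hkey : ((n2 : ℝ) - n4) * s < 2 * ((n1 : ℝ) - n6) * s' := by
      have := Real.sqrt_lt_sqrt (sq_nonneg _) hsq
      rwa [Real.sqrt_sq h0, Real.sqrt_sq h0'] at this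
    have e3 : ((n2 : ℝ) / (e * 2) - (n4 : ℝ) / (e * 2)) * (12 / s' * c)
        = (((n2 : ℝ) - n4) * s) * (6 * c / (e * s * s')) := by
      field_simp; ring
    have e4 : ((n1 : ℝ) / e - (n6 : ℝ) / e) * (12 / s * c)
        = (2 * ((n1 : ℝ) - n6) * s') * (6 * c / (e * s * s')) := by
      field_simp; ring
    rw [e3, e4]
    exact mul_lt_mul_of_pos_right hkey (by positivity)
  · -- hypothesis refuted: A ≤ 0
    have hA : ((2 * (n1 + n3) - n2 - n4 : ℤ) : ℝ) ≤ 0 := by exact_mod_cast h1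
    push_cast at hA
    have hD : (0 : ℝ) ≤ (n1 : ℝ) - n6 := by exact_mod_cast h2
    have hAs : (2 * ((n1 : ℝ) + n3) - n2 - n4) * s ≤ 0 :=
      mul_nonpos_iff.mpr (Or.inr ⟨hA, hs.le⟩)
    linarith
  · -- hypothesis refuted: A > 0 but g A² ≤ 4 D²
    have hA : (0 : ℝ) < ((2 * (n1 + n3) - n2 - n4 : ℤ) : ℝ) := by exact_mod_cast h1
    push_cast at hA
    have hD : (0 : ℝ) ≤ (n1 : ℝ) - n6 := by exact_mod_cast h2
    have h3' : (G : ℝ) * (2 * ((n1 : ℝ) + n3) - n2 - n4) ^ 2 ≤ 4 * ((n1 : ℝ) - n6) ^ 2 := by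
      exact_mod_cast h3
    have hsq : ((2 * ((n1 : ℝ) + n3) - n2 - n4) * s) ^ 2 ≤ (2 * ((n1 : ℝ) - n6)) ^ 2 := by
      nlinarith [h3', hs2]
    have hle : (2 * ((n1 : ℝ) + n3) - n2 - n4) * s ≤ 2 * ((n1 : ℝ) - n6) := by
      have := Real.sqrt_le_sqrt hsq
      rwa [Real.sqrt_sq (mul_nonneg hA.le hs.le), Real.sqrt_sq (by linarith)] at this
    linarith


/-- A mafia group never lets its members go when they want to leave: with
`n = 25`, `μ = 0`, `σ = 12`, for every integer threshold `0 ≤ t ≤ 24` and every group size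
`2 ≤ g ≤ 25`, if a group member benefits from leaving the group
(`E_I(g−1, t) > E_G(g, t)`), then the departure harms the remaining group members
(`E_G(g−1, t) < E_G(g, t)`). -/

theorem mafia_never_lets_go
    (t : ℤ) (ht1 : 0 ≤ t) (ht2 : t ≤ 24)
    (g : ℕ) (hg1 : 2 ≤ g) (hg2 : g ≤ 25)
    (hleave : EI25 (g - 1) t > EG25 g t) :
    EG25 (g - 1) t < EG25 g t := by
  have hcond : Cond g t :=
    condAll g (Finset.mem_Icc.mpr ⟨hg1, hg2⟩) t (Finset.mem_Icc.mpr ⟨ht1, ht2⟩)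
  have hcastZ : ((g - 1 : ℕ) : ℤ) = (g : ℤ) - 1 := by omega
  have hcastR : ((g - 1 : ℕ) : ℝ) = (g : ℝ) - 1 := by
    rw [Nat.cast_sub (by omega : 1 ≤ g)]; norm_num
  have b1 : 25 - (g - 1) = 25 - g + 1 := by omega
  have b2 : 25 - (g - 1) - 1 = 25 - g := by omega
  have a1 : t - ((g : ℤ) - 1) - 1 = t - g := by ring
  have a2 : t - ((g : ℤ) - 1) = t - g + 1 := by ring
  rw [EI25_eq, EG25_eq, hcastZ, b2, b1, a1, a2] at hleave
  rw [EG25_eq, EG25_eq, hcastZ, hcastR, b1, a2]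
  simp only [Pkm_half, pow_succ] at hleave ⊢
  have hs : 0 < Real.sqrt ((g : ℕ) : ℝ) := Real.sqrt_pos.mpr (by positivity)
  have hs' : 0 < Real.sqrt ((g : ℝ) - 1) :=
    Real.sqrt_pos.mpr (by have h2g : (2 : ℝ) ≤ g := (by exact_mod_cast hg1); linarith)
  have hs2 : Real.sqrt ((g : ℕ) : ℝ) ^ 2 = (((g : ℤ) : ℝ)) := by
    rw [Real.sq_sqrt (by positivity)]; push_cast; ring
  have hs'2 : Real.sqrt ((g : ℝ) - 1) ^ 2 = (((g : ℤ) : ℝ)) - 1 := by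
    rw [Real.sq_sqrt (by have h2g : (2 : ℝ) ≤ g := (by exact_mod_cast hg1); linarith)]
    push_cast; ring
  exact realLemma (stdPDF 0) (Real.sqrt ((g : ℕ) : ℝ)) (Real.sqrt ((g : ℝ) - 1))
    ((2 : ℝ) ^ (25 - g))
    (Nkm (t - g) (25 - g)) (Nkm (t - g + 1) (25 - g + 1)) (Nkm (t - 1) (25 - g))
    (Nkm t (25 - g + 1)) (Nkm t (25 - g)) (g : ℤ)
    stdPDF_zero_pos hs hs' (by positivity) hs2 hs'2 hcond hleave
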